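/- Small supports suffice for optimal threats: let k, n ≥ 1 be integers and let u₁ : Fin k × Fin n × Fin n → ℝ be Player 1's payoff in a three-player game. Then there exist mixed strategies σ₂, σ₃ on Fin n, each with support of cardinality at most k, such that max_{a ∈ Fin k} ∑_{j,k'} σ₂(j)·σ₃(k')·u₁(a,j,k') equals the minmax value for Player 1. -/

import Mathlib

/-- A mixed strategy on a finite strategy set `S`. -/
def IsMixedStrategy {S : Type*} [Fintype S] (σ : S → ℝ) : Prop :=
  (∀ s, 0 ≤ σ s) ∧ ∑ s, σ s = 1

/-- The minmax (threat) value for Player 1 of the three-player game with payoff `u`: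
the minimum over mixed strategy profiles of Players 2 and 3 of the best-response
payoff of Player 1 (the minimum is attained, so `sInf` is a minimum). -/
noncomputable def minmaxVal {S₁ S₂ S₃ : Type*} [Fintype S₁] [Fintype S₂] [Fintype S₃]
    (u : S₁ × S₂ × S₃ → ℝ) : ℝ :=
  sInf { v | ∃ σ₂ : S₂ → ℝ, ∃ σ₃ : S₃ → ℝ,
    IsMixedStrategy σ₂ ∧ IsMixedStrategy σ₃ ∧
    v = ⨆ a : S₁, ∑ j : S₂, ∑ k : S₃, σ₂ j * σ₃ k * u (a, j, k) }

/-!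
Take a profile `(σ₂, σ₃)` attaining the minmax value (a continuous function on a product of
simplices). Holding `σ₃` fixed, Player 2's pure strategies `j` give payoff vectors `y j ∈ ℝ^k`,
one coordinate per action of Player 1. If `σ₂` uses more than `k` of them, then `(1, 0)` and the
vectors `(y j, 1)`, `j` in the support, are more than `k + 1` vectors in `ℝ^k × ℝ`, hence
linearly dependent, and a dependence relation yields a zero-sum direction `d` on the support of
`σ₂` along which every coordinate of the payoff vector weakly decreases; moving along `d` until a
weight vanishes shrinks the support. Iterating gives `σ₂'` with at most `k` pure strategies and a
pointwise smaller payoff vector; doing the same for Player 3 against `σ₂'` gives a profile whose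
best-response value is at most, hence equal to, the minmax value.
-/

open Finset

section MixedStrategy

variable {ι : Type*} [Fintype ι]

noncomputable def posSupport (σ : ι → ℝ) : Finset ι := univ.filter fun j => 0 < σ j

lemma mem_posSupport {σ : ι → ℝ} {j : ι} : j ∈ posSupport σ ↔ 0 < σ j := by
  simp [posSupport]

lemma exists_add_smul_posSupport_ssubset {σ d : ι → ℝ} (hσ : IsMixedStrategy σ)
    (hd_supp : ∀ j ∉ posSupport σ, d j = 0) (hd_ne : ∃ j, d j ≠ 0) (hd_sum : ∑ j, d j = 0) :
    ∃ t : ℝ, 0 ≤ t ∧ IsMixedStrategy (σ + t • d) ∧ posSupport (σ + t • d) ⊂ posSupport σ := by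
  have hneg : (univ.filter fun j => d j < 0).Nonempty := by
    by_contra! h
    have hd_nonneg : ∀ j ∈ univ, 0 ≤ d j := fun j _ => by
      simpa using filter_eq_empty_iff.mp h (mem_univ j)
    obtain ⟨j, hj⟩ := hd_ne
    exact hj ((sum_eq_zero_iff_of_nonneg hd_nonneg).mp hd_sum j (mem_univ j))
  obtain ⟨j₀, hj₀, hmin⟩ := exists_min_image _ (fun j => σ j / -d j) hneg
  simp only [mem_filter, mem_univ, true_and] at hj₀ hmin
  set t := σ j₀ / -d j₀
  have ht : 0 ≤ t := div_nonneg (hσ.1 j₀) (by linarith)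
  have hτ_nonneg : ∀ j, 0 ≤ σ j + t * d j := fun j => by
    rcases lt_or_ge (d j) 0 with hdj | hdj
    · have := (le_div_iff₀ (neg_pos.mpr hdj)).mp (hmin j hdj)
      linarith
    · exact add_nonneg (hσ.1 j) (mul_nonneg ht hdj)
  have hτ_j₀ : σ j₀ + t * d j₀ = 0 := by
    rw [div_mul_eq_mul_div, div_neg, mul_div_assoc, div_self hj₀.ne, mul_one, add_neg_cancel]
  refine ⟨t, ht, ⟨hτ_nonneg, ?_⟩, (ssubset_iff_of_subset fun j hj => ?_).mpr ⟨j₀, ?_, ?_⟩⟩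
  · simp [sum_add_distrib, ← mul_sum, hσ.2, hd_sum]
  · by_contra h
    have hσj : σ j = 0 := le_antisymm (not_lt.mp (mem_posSupport.not.mp h)) (hσ.1 j)
    simp [mem_posSupport, hd_supp j h, hσj] at hj
  · by_contra h
    exact hj₀.ne (hd_supp j₀ h)
  · simp [mem_posSupport, hτ_j₀]

lemma exists_zero_sum_direction_nonpos {A : Type*} [Fintype A] [Nonempty A] (y : ι → A → ℝ) (S : Finset ι)
    (hS : Fintype.card A < S.card) :
    ∃ d : ι → ℝ, (∀ j ∉ S, d j = 0) ∧ (∃ j, d j ≠ 0) ∧ ∑ j, d j = 0 ∧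
      ∀ a, ∑ j, d j * y j a ≤ 0 := by
  classical
  -- A relation `c • (1, 0) + ∑ j ∈ S, d j • (y j, 1) = 0` says `∑ d = 0` and `∑ d • y = -c`;
  -- up to a global sign, `c ≥ 0`.
  let v : Option ι → (A → ℝ) × ℝ := fun o => o.elim (1, 0) fun j => (y j, 1)
  have hdep : ¬ LinearIndepOn ℝ v (S.insertNone : Set (Option ι)) := fun h => by
    have := h.fintype_card_le_finrank
    simp only [Finset.coe_sort_coe, Fintype.card_coe, card_insertNone, Module.finrank_prod,
      Module.finrank_fintype_fun_eq_card, Module.finrank_self] at this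
    omega
  obtain ⟨f, hf, o, ho, hfo⟩ := not_linearIndepOn_finset_iff.mp hdep
  wlog hf_none : 0 ≤ f none generalizing f
  · exact this (-f) (by simp [neg_smul, sum_neg_distrib, hf]) (by simpa using hfo)
      (by simp only [Pi.neg_apply]; linarith)
  simp only [sum_insertNone, v, Option.elim, Prod.smul_mk, smul_eq_mul, mul_zero, mul_one,
    Prod.ext_iff, Prod.fst_add, Prod.snd_add, Prod.fst_sum, Prod.snd_sum, Prod.fst_zero,
    Prod.snd_zero, zero_add] at hf
  obtain ⟨hf_pay, hf_sum⟩ := hf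
  have hpay : ∀ a, ∑ j ∈ S, f (some j) * y j a = -f none := fun a => by
    have := congrFun hf_pay a
    simp only [Pi.add_apply, Finset.sum_apply, Pi.smul_apply, smul_eq_mul, Pi.one_apply,
      mul_one, Pi.zero_apply] at this
    linarith
  refine ⟨fun j => if j ∈ S then f (some j) else 0, fun j hj => if_neg hj, ?_, ?_, fun a => ?_⟩
  · by_contra! h
    have hS_zero : ∀ j ∈ S, f (some j) = 0 := fun j hj => by simpa [hj] using h j
    have hf_none_zero : f none = 0 := by
      have := hpay (Classical.arbitrary A)
      rw [sum_eq_zero fun j hj => by rw [hS_zero j hj, zero_mul]] at this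
      linarith
    cases o with
    | none => exact hfo hf_none_zero
    | some j => exact hfo (hS_zero j (by simpa using ho))
  · rw [Fintype.sum_extend_by_zero, hf_sum]
  · simp_rw [ite_mul, zero_mul]
    rw [Fintype.sum_extend_by_zero, hpay]
    linarith

lemma exists_posSupport_card_le_of_payoff_le {A : Type*} [Fintype A] [Nonempty A]
    (y : ι → A → ℝ) {σ : ι → ℝ} (hσ : IsMixedStrategy σ) :
    ∃ τ, IsMixedStrategy τ ∧ (posSupport τ).card ≤ Fintype.card A ∧
      ∀ a, ∑ j, τ j * y j a ≤ ∑ j, σ j * y j a := by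
  by_cases hsmall : (posSupport σ).card ≤ Fintype.card A
  · exact ⟨σ, hσ, hsmall, fun _ => le_rfl⟩
  obtain ⟨d, hd_supp, hd_ne, hd_sum, hd_pay⟩ :=
    exists_zero_sum_direction_nonpos y (posSupport σ) (not_le.mp hsmall)
  obtain ⟨t, ht, hσ', hsupp⟩ := exists_add_smul_posSupport_ssubset hσ hd_supp hd_ne hd_sum
  have hpay : ∀ a, ∑ j, (σ + t • d) j * y j a ≤ ∑ j, σ j * y j a := fun a => by
    simp only [Pi.add_apply, Pi.smul_apply, smul_eq_mul, add_mul, sum_add_distrib, mul_assoc,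
      ← mul_sum]
    linarith [mul_nonpos_of_nonneg_of_nonpos ht (hd_pay a)]
  obtain ⟨τ, hτ, hcard, hτ_pay⟩ := exists_posSupport_card_le_of_payoff_le y hσ'
  exact ⟨τ, hτ, hcard, fun a => (hτ_pay a).trans (hpay a)⟩
termination_by (posSupport σ).card
decreasing_by exact card_lt_card hsupp

end MixedStrategy

section Game

variable {S₁ S₂ S₃ : Type*} [Fintype S₂] [Fintype S₃]

def expectedPayoff (u : S₁ × S₂ × S₃ → ℝ) (σ₂ : S₂ → ℝ) (σ₃ : S₃ → ℝ) (a : S₁) : ℝ :=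
  ∑ j, ∑ k, σ₂ j * σ₃ k * u (a, j, k)

lemma expectedPayoff_eq_sum_left (u : S₁ × S₂ × S₃ → ℝ) (σ₂ : S₂ → ℝ) (σ₃ : S₃ → ℝ) (a : S₁) :
    expectedPayoff u σ₂ σ₃ a = ∑ j, σ₂ j * ∑ k, σ₃ k * u (a, j, k) := by
  simp only [expectedPayoff, mul_sum, mul_assoc]

lemma expectedPayoff_eq_sum_right (u : S₁ × S₂ × S₃ → ℝ) (σ₂ : S₂ → ℝ) (σ₃ : S₃ → ℝ) (a : S₁) :
    expectedPayoff u σ₂ σ₃ a = ∑ k, σ₃ k * ∑ j, σ₂ j * u (a, j, k) := by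
  rw [expectedPayoff, sum_comm]
  simp only [mul_sum]
  exact sum_congr rfl fun _ _ => sum_congr rfl fun _ _ => by ring

lemma continuous_iSup_expectedPayoff [Fintype S₁] [Nonempty S₁] (u : S₁ × S₂ × S₃ → ℝ) :
    Continuous fun p : (S₂ → ℝ) × (S₃ → ℝ) => ⨆ a, expectedPayoff u p.1 p.2 a := by
  simp only [← sup'_univ_eq_ciSup]
  refine Continuous.finset_sup'_apply univ_nonempty fun a _ => ?_
  unfold expectedPayoff
  fun_prop

lemma exists_forall_iSup_expectedPayoff_le [Fintype S₁] [Nonempty S₁] [Nonempty S₂] [Nonempty S₃]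
    (u : S₁ × S₂ × S₃ → ℝ) :
    ∃ σ₂ σ₃, IsMixedStrategy σ₂ ∧ IsMixedStrategy σ₃ ∧
      ∀ τ₂ τ₃, IsMixedStrategy τ₂ → IsMixedStrategy τ₃ →
        ⨆ a, expectedPayoff u σ₂ σ₃ a ≤ ⨆ a, expectedPayoff u τ₂ τ₃ a := by
  classical
  have hne : (stdSimplex ℝ S₂ ×ˢ stdSimplex ℝ S₃).Nonempty :=
    ⟨(_, _), single_mem_stdSimplex ℝ (Classical.arbitrary S₂),
      single_mem_stdSimplex ℝ (Classical.arbitrary S₃)⟩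
  obtain ⟨⟨σ₂, σ₃⟩, ⟨hσ₂, hσ₃⟩, hmin⟩ :=
    ((isCompact_stdSimplex ℝ S₂).prod (isCompact_stdSimplex ℝ S₃)).exists_isMinOn hne
      (continuous_iSup_expectedPayoff u).continuousOn
  exact ⟨σ₂, σ₃, hσ₂, hσ₃, fun τ₂ τ₃ h₂ h₃ => isMinOn_iff.mp hmin (τ₂, τ₃) ⟨h₂, h₃⟩⟩

lemma minmaxVal_eq_iSup_expectedPayoff [Fintype S₁] {u : S₁ × S₂ × S₃ → ℝ} {σ₂ : S₂ → ℝ}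
    {σ₃ : S₃ → ℝ}
    (hσ₂ : IsMixedStrategy σ₂) (hσ₃ : IsMixedStrategy σ₃)
    (hmin : ∀ τ₂ τ₃, IsMixedStrategy τ₂ → IsMixedStrategy τ₃ →
        ⨆ a, expectedPayoff u σ₂ σ₃ a ≤ ⨆ a, expectedPayoff u τ₂ τ₃ a) :
    minmaxVal u = ⨆ a, expectedPayoff u σ₂ σ₃ a :=
  IsLeast.csInf_eq ⟨⟨σ₂, σ₃, hσ₂, hσ₃, rfl⟩, by
    rintro _ ⟨τ₂, τ₃, h₂, h₃, rfl⟩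
    exact hmin τ₂ τ₃ h₂ h₃⟩

end Game

/-- Shapley–Snow style small supports: in a `k × n × n` game there is an optimal threat
profile for Players 2 and 3 in which each mixed strategy has support of size at most
`k`. -/
theorem optimal_threat_small_support (k n : ℕ) (hk : 1 ≤ k) (hn : 1 ≤ n)
    (u₁ : Fin k × Fin n × Fin n → ℝ) :
    ∃ σ₂ σ₃ : Fin n → ℝ, IsMixedStrategy σ₂ ∧ IsMixedStrategy σ₃ ∧
      (Finset.univ.filter fun s => 0 < σ₂ s).card ≤ k ∧
      (Finset.univ.filter fun s => 0 < σ₃ s).card ≤ k ∧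
      (⨆ a : Fin k, ∑ j : Fin n, ∑ k' : Fin n, σ₂ j * σ₃ k' * u₁ (a, j, k'))
        = minmaxVal u₁ := by
  have : Nonempty (Fin k) := ⟨⟨0, hk⟩⟩
  have : Nonempty (Fin n) := ⟨⟨0, hn⟩⟩
  obtain ⟨σ₂, σ₃, hσ₂, hσ₃, hmin⟩ := exists_forall_iSup_expectedPayoff_le u₁
  obtain ⟨τ₂, hτ₂, hcard₂, hpay₂⟩ :=
    exists_posSupport_card_le_of_payoff_le (fun j a => ∑ k', σ₃ k' * u₁ (a, j, k')) hσ₂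
  obtain ⟨τ₃, hτ₃, hcard₃, hpay₃⟩ :=
    exists_posSupport_card_le_of_payoff_le (fun k' a => ∑ j, τ₂ j * u₁ (a, j, k')) hσ₃
  have hpay (a : Fin k) : expectedPayoff u₁ τ₂ τ₃ a ≤ expectedPayoff u₁ σ₂ σ₃ a :=
    calc expectedPayoff u₁ τ₂ τ₃ a = ∑ k', τ₃ k' * ∑ j, τ₂ j * u₁ (a, j, k') :=
          expectedPayoff_eq_sum_right ..
      _ ≤ ∑ k', σ₃ k' * ∑ j, τ₂ j * u₁ (a, j, k') := hpay₃ a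
      _ = ∑ j, τ₂ j * ∑ k', σ₃ k' * u₁ (a, j, k') := by
          rw [← expectedPayoff_eq_sum_right, expectedPayoff_eq_sum_left]
      _ ≤ ∑ j, σ₂ j * ∑ k', σ₃ k' * u₁ (a, j, k') := hpay₂ a
      _ = expectedPayoff u₁ σ₂ σ₃ a := (expectedPayoff_eq_sum_left ..).symm
  rw [Fintype.card_fin] at hcard₂ hcard₃
  refine ⟨τ₂, τ₃, hτ₂, hτ₃, hcard₂, hcard₃, ?_⟩
  rw [minmaxVal_eq_iSup_expectedPayoff hσ₂ hσ₃ hmin]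
  exact le_antisymm (ciSup_mono (Set.finite_range _).bddAbove hpay) (hmin τ₂ τ₃ hτ₂ hτ₃)
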